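/- arXiv:2008.03676 — 6 statements merged into one kernel-verified Lean document; each statement's English description precedes it below -/
import Mathlib

section
/- Let n ≥ 1, let P_1, …, P_n be reals with 0 < P_i ≤ 1, let μ_1, …, μ_n ≥ 0, let E be any real, and set r_i = μ_i/P_i. Then ∑_{i=1}^n (∏_{j<i}(1−P_j))·P_i·(∑_{j=1}^i μ_j) + (∏_{j=1}^n(1−P_j))·(∑_{j=1}^n μ_j + E) = ∑_{i=1}^n (∏_{j<i}(1−P_j))·P_i·r_i + (∏_{j=1}^n(1−P_j))·E. (The expected cost of tossing one-time coins c_1, …, c_n in order with penalty E can be rewritten as a convex combination of the rates r_1, …, r_n and E.) -/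
open Finset

private lemma nat_key (P μ : ℕ → ℝ) : ∀ n : ℕ,
    (∑ i ∈ range n, (∏ j ∈ range i, (1 - P j)) * P i * (∑ j ∈ range (i+1), μ j))
      + (∏ j ∈ range n, (1 - P j)) * (∑ j ∈ range n, μ j)
    = ∑ i ∈ range n, (∏ j ∈ range i, (1 - P j)) * μ i := by
  intro n
  induction n with
  | zero => simp
  | succ m ih =>
    rw [sum_range_succ, sum_range_succ (fun i => (∏ j ∈ range i, (1 - P j)) * μ i),
      prod_range_succ, sum_range_succ μ]
    have := ih
    ring_nf
    ring_nf at this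
    linarith [this]

private lemma filter_lt_eq_Iio' {n : ℕ} (i : Fin n) :
    univ.filter (fun j => j < i) = Iio i := by ext; simp

private lemma filter_le_eq_Iic' {n : ℕ} (i : Fin n) :
    univ.filter (fun j => j ≤ i) = Iic i := by ext; simp

private lemma prod_Iio_eq_range {n : ℕ} (F : ℕ → ℝ) (i : Fin n) :
    ∏ j ∈ Iio i, F j.val = ∏ j ∈ range i.val, F j := by
  simpa [Fin.map_valEmbedding_Iio, Nat.Iio_eq_range] using
    (Finset.prod_map (Iio i) Fin.valEmbedding F).symm

private lemma sum_Iio_eq_range {n : ℕ} (F : ℕ → ℝ) (i : Fin n) :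
    ∑ j ∈ Iio i, F j.val = ∑ j ∈ range i.val, F j := by
  simpa [Fin.map_valEmbedding_Iio, Nat.Iio_eq_range] using
    (Finset.sum_map (Iio i) Fin.valEmbedding F).symm

private lemma sum_Iic_eq_range {n : ℕ} (F : ℕ → ℝ) (i : Fin n) :
    ∑ j ∈ Iic i, F j.val = ∑ j ∈ range (i.val + 1), F j := by
  have h : Iic (i : ℕ) = range (i.val + 1) := by ext; simp [Nat.lt_succ_iff]
  simpa [Fin.map_valEmbedding_Iic, h] using
    (Finset.sum_map (Iic i) Fin.valEmbedding F).symm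

/-- Equation (3) equals Equation (4): the expected cost of tossing one-time simple
coins `c_1, …, c_n` in order with penalty `E` can be rewritten as a convex
combination of the rates `r_1, …, r_n` and `E`. (Indices are over `Fin n`.) -/
theorem cost_eq_convex_combination_of_rates
    (n : ℕ) (hn : 1 ≤ n) (P μ r : Fin n → ℝ)
    (hP : ∀ i, 0 < P i ∧ P i ≤ 1) (hμ : ∀ i, 0 ≤ μ i) (E : ℝ)
    (hr : ∀ i, r i = μ i / P i) :
    (∑ i, (∏ j ∈ univ.filter (fun j => j < i), (1 - P j)) * P i *
        (∑ j ∈ univ.filter (fun j => j ≤ i), μ j))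
      + (∏ j, (1 - P j)) * ((∑ j, μ j) + E)
    = (∑ i, (∏ j ∈ univ.filter (fun j => j < i), (1 - P j)) * P i * r i)
      + (∏ j, (1 - P j)) * E := by
  -- extend to ℕ
  set P' : ℕ → ℝ := fun k => if h : k < n then P ⟨k, h⟩ else 0 with hP'
  set μ' : ℕ → ℝ := fun k => if h : k < n then μ ⟨k, h⟩ else 0 with hμ'
  have hPval : ∀ i : Fin n, P' i.val = P i := fun i => by simp [hP', i.isLt]
  have hμval : ∀ i : Fin n, μ' i.val = μ i := fun i => by simp [hμ', i.isLt]
  have hri : ∀ i : Fin n, P i * r i = μ i := by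
    intro i
    rw [hr i, mul_div_cancel₀ _ (ne_of_gt (hP i).1)]
  have key := nat_key P' μ' n
  -- rewrite all Fin sums/products as range sums/products
  have e1 : (∑ i, (∏ j ∈ univ.filter (fun j => j < i), (1 - P j)) * P i *
        (∑ j ∈ univ.filter (fun j => j ≤ i), μ j))
      = ∑ i ∈ range n, (∏ j ∈ range i, (1 - P' j)) * P' i * (∑ j ∈ range (i+1), μ' j) := by
    rw [← Fin.sum_univ_eq_sum_range]
    refine Finset.sum_congr rfl fun i _ => ?_
    rw [filter_lt_eq_Iio', filter_le_eq_Iic']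
    rw [hPval i]
    congr 1
    · congr 1
      rw [← prod_Iio_eq_range (fun k => 1 - P' k) i]
      exact Finset.prod_congr rfl fun j _ => by rw [hPval j]
    · rw [← sum_Iic_eq_range μ' i]
      exact Finset.sum_congr rfl fun j _ => by rw [hμval j]
  have e2 : (∏ j, (1 - P j)) = ∏ j ∈ range n, (1 - P' j) := by
    rw [← Fin.prod_univ_eq_prod_range]
    exact Finset.prod_congr rfl fun j _ => by rw [hPval j]
  have e3 : (∑ j, μ j) = ∑ j ∈ range n, μ' j := by
    rw [← Fin.sum_univ_eq_sum_range]
    exact Finset.sum_congr rfl fun j _ => by rw [hμval j]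
  have e4 : (∑ i, (∏ j ∈ univ.filter (fun j => j < i), (1 - P j)) * P i * r i)
      = ∑ i ∈ range n, (∏ j ∈ range i, (1 - P' j)) * μ' i := by
    rw [← Fin.sum_univ_eq_sum_range]
    refine Finset.sum_congr rfl fun i _ => ?_
    rw [filter_lt_eq_Iio', mul_assoc, hri i, ← hμval i]
    congr 1
    rw [← prod_Iio_eq_range (fun k => 1 - P' k) i]
    exact Finset.prod_congr rfl fun j _ => by rw [hPval j]
  rw [e1, e2, e3, e4, mul_add]
  linarith [key]
end

section
/- Let SEQ = (c_1, …, c_n) be a sequence of simple coins with c_k = (P_k, μ_k), 0 < P_k ≤ 1, rates r_k = μ_k/P_k, let E be a real penalty, and let 1 ≤ i < n. Let SEQ′ be obtained from SEQ by interchanging c_i and c_{i+1}. Then COST(SEQ′, E) − COST(SEQ, E) = (∏_{k=1}^{i−1}(1−P_k))·P_i·P_{i+1}·(r_{i+1}−r_i). Consequently, if r_i ≥ r_{i+1} then COST(SEQ′, E) ≤ COST(SEQ, E); and if moreover P_k < 1 for all k < i, then equality holds if and only if r_i = r_{i+1}. -/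
open Finset

/-- Expected cost of tossing the coins `(P 0, μ 0), …, (P (n-1), μ (n-1))` in order,
paying the penalty `E` if all tosses fail. -/
noncomputable def seqCost (n : ℕ) (P μ : ℕ → ℝ) (E : ℝ) : ℝ :=
  (∑ i ∈ range n, (∏ j ∈ range i, (1 - P j)) * μ i) + (∏ j ∈ range n, (1 - P j)) * E

/-!
Tossing `m + k` coins is tossing the first `m` with, as penalty, the cost of tossing the
remaining `k`. Cutting the sequence before coin `i` and after coin `i + 1`, the swap only
changes the middle two-coin cost, by `P i μ (i+1) - P (i+1) μ i`; the cost is affine in the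
penalty with slope `∏_{k<i} (1 - P k)`, which gives the difference.
-/

section SeqCost

variable {n : ℕ} {P P' μ μ' : ℕ → ℝ} {E : ℝ}

theorem seqCost_congr (hP : ∀ j < n, P j = P' j) (hμ : ∀ j < n, μ j = μ' j) :
    seqCost n P μ E = seqCost n P' μ' E := by
  have hprod : ∀ m ≤ n, ∏ j ∈ range m, (1 - P j) = ∏ j ∈ range m, (1 - P' j) :=
    fun m hm => prod_congr rfl fun j hj => by rw [hP j (by grind)]
  unfold seqCost
  rw [hprod n le_rfl, sum_congr rfl fun j hj => by
    rw [hprod j (mem_range.1 hj).le, hμ j (mem_range.1 hj)]]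

theorem seqCost_add (m k : ℕ) (P μ : ℕ → ℝ) (E : ℝ) :
    seqCost (m + k) P μ E
      = seqCost m P μ (seqCost k (fun j => P (m + j)) (fun j => μ (m + j)) E) := by
  simp only [seqCost, sum_range_add, prod_range_add, mul_add, mul_sum]
  ring_nf

theorem seqCost_sub_seqCost_penalty (n : ℕ) (P μ : ℕ → ℝ) (E E' : ℝ) :
    seqCost n P μ E' - seqCost n P μ E = (∏ j ∈ range n, (1 - P j)) * (E' - E) := by
  unfold seqCost
  ring

theorem seqCost_two (P μ : ℕ → ℝ) (E : ℝ) :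
    seqCost 2 P μ E = μ 0 + (1 - P 0) * μ 1 + (1 - P 0) * (1 - P 1) * E := by
  simp only [seqCost, sum_range_succ, prod_range_succ, sum_range_zero, prod_range_zero]
  ring

theorem seqCost_swap_sub_seqCost {i : ℕ} (hi : i + 1 < n) :
    seqCost n (P ∘ Equiv.swap i (i + 1)) (μ ∘ Equiv.swap i (i + 1)) E - seqCost n P μ E
      = (∏ k ∈ range i, (1 - P k)) * (P i * μ (i + 1) - P (i + 1) * μ i) := by
  obtain ⟨k, rfl⟩ : ∃ k, n = i + (2 + k) := ⟨n - (i + 2), by omega⟩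
  set σ := Equiv.swap i (i + 1)
  have hσ_lt : ∀ j < i, σ j = j := fun j hj =>
    Equiv.swap_apply_of_ne_of_ne (by omega) (by omega)
  have hσ_tail : ∀ j, σ (i + (2 + j)) = i + (2 + j) := fun j =>
    Equiv.swap_apply_of_ne_of_ne (by omega) (by omega)
  rw [seqCost_add i, seqCost_add i, seqCost_add 2, seqCost_add 2,
    seqCost_congr (P' := P) (μ' := μ) (fun j hj => by simp [hσ_lt j hj])
      (fun j hj => by simp [hσ_lt j hj]),
    seqCost_sub_seqCost_penalty, seqCost_two, seqCost_two]
  simp only [Function.comp_apply, hσ_tail, add_zero, σ, Equiv.swap_apply_left,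
    Equiv.swap_apply_right]
  ring

end SeqCost

theorem swap_adjacent_coins_cost_general
    (n : ℕ) (P μ r : ℕ → ℝ)
    (hP : ∀ k < n, 0 < P k ∧ P k ≤ 1)
    (hr : ∀ k < n, r k = μ k / P k) (E : ℝ)
    (i : ℕ) (hi : i + 1 < n) :
    seqCost n (P ∘ Equiv.swap i (i + 1)) (μ ∘ Equiv.swap i (i + 1)) E
        - seqCost n P μ E
      = (∏ k ∈ range i, (1 - P k)) * P i * P (i + 1) * (r (i + 1) - r i)
    ∧ (r (i + 1) ≤ r i →
        seqCost n (P ∘ Equiv.swap i (i + 1)) (μ ∘ Equiv.swap i (i + 1)) E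
          ≤ seqCost n P μ E)
    ∧ ((∀ k < i, P k < 1) →
        (seqCost n (P ∘ Equiv.swap i (i + 1)) (μ ∘ Equiv.swap i (i + 1)) E
            = seqCost n P μ E ↔ r i = r (i + 1))) := by
  have hPi := (hP i (by omega)).1
  have hPi₁ := (hP (i + 1) hi).1
  have hdiff : seqCost n (P ∘ Equiv.swap i (i + 1)) (μ ∘ Equiv.swap i (i + 1)) E
      - seqCost n P μ E = (∏ k ∈ range i, (1 - P k)) * P i * P (i + 1) * (r (i + 1) - r i) := by
    rw [seqCost_swap_sub_seqCost hi, hr i (by omega), hr (i + 1) hi]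
    field_simp
  have hA : 0 ≤ ∏ k ∈ range i, (1 - P k) :=
    prod_nonneg fun k hk => sub_nonneg.2 (hP k (by grind)).2
  refine ⟨hdiff, fun hle => ?_, fun hlt => ?_⟩
  · rw [← sub_nonpos, hdiff]
    exact mul_nonpos_of_nonneg_of_nonpos (by positivity) (sub_nonpos.2 hle)
  · have hA_pos : 0 < ∏ k ∈ range i, (1 - P k) :=
      prod_pos fun k hk => sub_pos.2 (hlt k (mem_range.1 hk))
    rw [← sub_eq_zero, hdiff, mul_eq_zero, or_iff_right (by positivity), sub_eq_zero, eq_comm]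

/-- Lemma 1: interchanging adjacent coins `c_i` and `c_{i+1}` (`0`-based indices `i`
and `i+1` with `i + 1 < n`) changes the cost by
`(∏_{k<i}(1-P_k)) · P_i · P_{i+1} · (r_{i+1} - r_i)`. Consequently, if
`r_i ≥ r_{i+1}` the swapped sequence costs no more, and (when `P_k < 1` for all
`k < i`) the costs are equal iff `r_i = r_{i+1}`. -/
theorem swap_adjacent_coins_cost
    (n : ℕ) (P μ r : ℕ → ℝ)
    (hP : ∀ k < n, 0 < P k ∧ P k ≤ 1) (hμ : ∀ k < n, 0 ≤ μ k)
    (hr : ∀ k < n, r k = μ k / P k) (E : ℝ)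
    (i : ℕ) (hi : i + 1 < n) :
    seqCost n (P ∘ Equiv.swap i (i + 1)) (μ ∘ Equiv.swap i (i + 1)) E
        - seqCost n P μ E
      = (∏ k ∈ range i, (1 - P k)) * P i * P (i + 1) * (r (i + 1) - r i)
    ∧ (r (i + 1) ≤ r i →
        seqCost n (P ∘ Equiv.swap i (i + 1)) (μ ∘ Equiv.swap i (i + 1)) E
          ≤ seqCost n P μ E)
    ∧ ((∀ k < i, P k < 1) →
        (seqCost n (P ∘ Equiv.swap i (i + 1)) (μ ∘ Equiv.swap i (i + 1)) E
            = seqCost n P μ E ↔ r i = r (i + 1))) :=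
  swap_adjacent_coins_cost_general n P μ r hP hr E i hi
end

section
/- Let c_1, …, c_n be one-time simple coins with c_i = (P_i, μ i), 0 < P_i < 1, and rates r_i = μ_i/P_i, and let E ≥ 0 be a penalty. For a permutation π of {1, …, n}, the ordering (c_{π(1)}, …, c_{π(n)}) is an optimal ordering, i.e. COST((c_{π(1)}, …, c_{π(n)}), E) ≤ COST((c_{σ(1)}, …, c_{σ(n)}), E) for every permutation σ, if and only if r_{π(i)} ≤ r_{π(i+1)} for all i = 1, …, n−1. -/
/-!
Swapping two adjacent coins `a, b` changes the cost by the survival probability of the coins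
before them times `a.2 * b.1 - b.2 * a.1`, which has the sign of `rate a - rate b`; so in an
optimal ordering the rates are nondecreasing. Conversely, take a rate-sorted list and any
permutation of it. Bringing the first coin of the sorted list to the front of the permutation
only passes coins of no smaller rate, so the cost does not increase, and then we recurse on
the remaining coins.
-/

/-- Expected cost of tossing a list of simple coins `(P, μ)` in order,
paying the penalty `E` if all tosses fail. -/
noncomputable def listCost (l : List (ℝ × ℝ)) (E : ℝ) : ℝ :=
  l.foldr (fun c a => c.2 + (1 - c.1) * a) E

lemma List.exists_append_ofFn_comp_swap_succ {α : Type*} {n : ℕ} (f : Fin n → α) (i : ℕ)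
    (h : i + 1 < n) :
    ∃ u v, List.ofFn f = u ++ f ⟨i, by omega⟩ :: f ⟨i + 1, h⟩ :: v ∧
      List.ofFn (f ∘ Equiv.swap ⟨i, by omega⟩ ⟨i + 1, h⟩) =
        u ++ f ⟨i + 1, h⟩ :: f ⟨i, by omega⟩ :: v := by
  refine ⟨(List.ofFn f).take i, (List.ofFn f).drop (i + 2), ?_, ?_⟩ <;>
  · refine List.ext_getElem (by simp; omega) fun k _ _ => ?_
    simp only [List.getElem_append, List.getElem_cons, List.getElem_ofFn, List.getElem_take,
      List.getElem_drop, List.length_take, List.length_ofFn, Function.comp_apply,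
      Equiv.swap_apply_def, Fin.ext_iff, min_eq_left (by omega : i ≤ n)]
    split_ifs <;> first | rfl | omega | (congr 1; ext; dsimp only; omega)

noncomputable def rate (c : ℝ × ℝ) : ℝ := c.2 / c.1

section listCost

variable {a b : ℝ × ℝ} {l l' u v : List (ℝ × ℝ)} {E : ℝ}

lemma rate_le_rate_iff (ha : 0 < a.1) (hb : 0 < b.1) :
    rate a ≤ rate b ↔ a.2 * b.1 ≤ b.2 * a.1 :=
  div_le_div_iff₀ ha hb

@[simp]
lemma listCost_cons : listCost (a :: l) E = a.2 + (1 - a.1) * listCost l E := rfl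

lemma listCost_append : listCost (u ++ l) E = listCost u (listCost l E) :=
  List.foldr_append

lemma listCost_cons_le_cons (ha : a.1 ≤ 1) (h : listCost l E ≤ listCost l' E) :
    listCost (a :: l) E ≤ listCost (a :: l') E := by
  have : 0 ≤ 1 - a.1 := sub_nonneg.2 ha
  simp only [listCost_cons]
  gcongr

lemma listCost_strictMono (hu : ∀ x ∈ u, x.1 < 1) : StrictMono (listCost u) := by
  induction u with
  | nil => exact strictMono_id
  | cons a u ih =>
    intro E E' h
    have : 0 < 1 - a.1 := sub_pos.2 (hu a List.mem_cons_self)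
    simp only [listCost_cons]
    gcongr
    exact ih (fun x hx => hu x (List.mem_cons_of_mem a hx)) h

lemma listCost_cons_cons_le_iff :
    listCost (a :: b :: l) E ≤ listCost (b :: a :: l) E ↔ a.2 * b.1 ≤ b.2 * a.1 := by
  have h : listCost (a :: b :: l) E - listCost (b :: a :: l) E = a.2 * b.1 - b.2 * a.1 := by
    simp only [listCost_cons]
    ring
  rw [← sub_nonpos, h, sub_nonpos]

lemma listCost_append_cons_cons_le_iff (hu : ∀ x ∈ u, x.1 < 1) :
    listCost (u ++ a :: b :: v) E ≤ listCost (u ++ b :: a :: v) E ↔ a.2 * b.1 ≤ b.2 * a.1 := by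
  rw [listCost_append, listCost_append, (listCost_strictMono hu).le_iff_le,
    listCost_cons_cons_le_iff]

lemma listCost_cons_append_le (hb : 0 < b.1) (hu : ∀ x ∈ u, 0 < x.1 ∧ x.1 ≤ 1)
    (hrate : ∀ x ∈ u, rate b ≤ rate x) :
    listCost (b :: (u ++ v)) E ≤ listCost (u ++ b :: v) E := by
  induction u with
  | nil => rfl
  | cons a u ih =>
    have ha := hu a List.mem_cons_self
    calc listCost (b :: a :: (u ++ v)) E
        ≤ listCost (a :: b :: (u ++ v)) E :=
          listCost_cons_cons_le_iff.2 <| (rate_le_rate_iff hb ha.1).1 (hrate a List.mem_cons_self)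
      _ ≤ listCost (a :: (u ++ b :: v)) E :=
          listCost_cons_le_cons ha.2 <| ih (fun x hx => hu x (List.mem_cons_of_mem a hx))
            (fun x hx => hrate x (List.mem_cons_of_mem a hx))

lemma listCost_le_of_perm_of_pairwise (hl : l.Pairwise fun a b => rate a ≤ rate b)
    (hl' : ∀ x ∈ l', 0 < x.1 ∧ x.1 ≤ 1) (h : l.Perm l') : listCost l E ≤ listCost l' E := by
  induction l generalizing l' with
  | nil => rw [List.nil_perm.1 h]
  | cons a l ih =>
    obtain ⟨u, v, rfl⟩ := List.append_of_mem (h.subset List.mem_cons_self)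
    have hperm : l.Perm (u ++ v) := (h.trans List.perm_middle).cons_inv
    have hsub : (u ++ v).Sublist (u ++ a :: v) := (List.sublist_cons_self a v).append_left u
    have ha := hl' a (by simp)
    calc listCost (a :: l) E
        ≤ listCost (a :: (u ++ v)) E :=
          listCost_cons_le_cons ha.2 <|
            ih (List.pairwise_cons.1 hl).2 (fun x hx => hl' x (hsub.subset hx)) hperm
      _ ≤ listCost (u ++ a :: v) E :=
          listCost_cons_append_le ha.1 (fun x hx => hl' x (by simp [hx]))
            (fun x hx => (List.pairwise_cons.1 hl).1 x (hperm.symm.subset (by simp [hx])))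

end listCost

theorem optimal_ordering_iff_sorted_by_rate_general
    (n : ℕ) (c : Fin n → ℝ × ℝ)
    (hP : ∀ i, 0 < (c i).1 ∧ (c i).1 < 1)
    (E : ℝ) (π : Equiv.Perm (Fin n)) :
    (∀ σ : Equiv.Perm (Fin n),
        listCost (List.ofFn (fun k => c (π k))) E
          ≤ listCost (List.ofFn (fun k => c (σ k))) E)
    ↔ (∀ (i : ℕ) (h : i + 1 < n),
        (c (π ⟨i, Nat.lt_of_succ_lt h⟩)).2 / (c (π ⟨i, Nat.lt_of_succ_lt h⟩)).1
          ≤ (c (π ⟨i + 1, h⟩)).2 / (c (π ⟨i + 1, h⟩)).1) := by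
  have hprob (σ : Equiv.Perm (Fin n)) : ∀ x ∈ List.ofFn (fun k => c (σ k)), 0 < x.1 ∧ x.1 < 1 := by
    intro x hx
    obtain ⟨k, rfl⟩ := List.mem_ofFn.1 hx
    exact hP (σ k)
  constructor
  · intro hopt i h
    obtain ⟨u, v, hπ, hswap⟩ := List.exists_append_ofFn_comp_swap_succ (fun k => c (π k)) i h
    have hu : ∀ x ∈ u, x.1 < 1 := fun x hx => (hprob π x (hπ ▸ List.mem_append_left _ hx)).2
    change rate _ ≤ rate _
    rw [rate_le_rate_iff (hP _).1 (hP _).1, ← listCost_append_cons_cons_le_iff (E := E) hu, ← hπ,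
      ← hswap]
    exact hopt (π * Equiv.swap _ _)
  · intro hsorted σ
    refine listCost_le_of_perm_of_pairwise ?_
      (fun x hx => ⟨(hprob σ x hx).1, (hprob σ x hx).2.le⟩)
      ((π.ofFn_comp_perm c).trans (σ.ofFn_comp_perm c).symm)
    rw [← List.pairwise_map (R := (· ≤ ·)), List.map_ofFn, ← List.sortedLE_iff_pairwise,
      List.sortedLE_iff_isChain, List.isChain_iff_getElem]
    simpa [rate] using hsorted

/-- Lemma 2: an ordering `(c_{π 0}, …, c_{π (n-1)})` of a set of one-time simple
coins is optimal (w.r.t. any penalty `E ≥ 0`) if and only if the rates along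
the ordering are nondecreasing. -/
theorem optimal_ordering_iff_sorted_by_rate
    (n : ℕ) (c : Fin n → ℝ × ℝ)
    (hP : ∀ i, 0 < (c i).1 ∧ (c i).1 < 1) (hμ : ∀ i, 0 ≤ (c i).2)
    (E : ℝ) (hE : 0 ≤ E) (π : Equiv.Perm (Fin n)) :
    (∀ σ : Equiv.Perm (Fin n),
        listCost (List.ofFn (fun k => c (π k))) E
          ≤ listCost (List.ofFn (fun k => c (σ k))) E)
    ↔ (∀ (i : ℕ) (h : i + 1 < n),
        (c (π ⟨i, Nat.lt_of_succ_lt h⟩)).2 / (c (π ⟨i, Nat.lt_of_succ_lt h⟩)).1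
          ≤ (c (π ⟨i + 1, h⟩)).2 / (c (π ⟨i + 1, h⟩)).1) :=
  optimal_ordering_iff_sorted_by_rate_general n c hP E π
end

section
/- Let l be a list of simple coins with probabilities in [0,1] and nonnegative fees, and let E be a real penalty. Then the minimum of COST(s, E) over all (order-preserving) sublists s of l equals foldr (fun c a => min a (μ_c + (1−P_c)·a)) E l. (This is the backwards-induction characterization of the optimal strategy when the coins must be considered in a given order and each coin may be tossed or skipped.) -/
@[simp]
theorem listCost_cons_s7 (c : ℝ × ℝ) (s : List (ℝ × ℝ)) (E : ℝ) :
    listCost (c :: s) E = c.2 + (1 - c.1) * listCost s E := rfl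

noncomputable def optimalCost (l : List (ℝ × ℝ)) (E : ℝ) : ℝ :=
  l.foldr (fun c a => min a (c.2 + (1 - c.1) * a)) E

@[simp]
theorem optimalCost_cons (c : ℝ × ℝ) (l : List (ℝ × ℝ)) (E : ℝ) :
    optimalCost (c :: l) E = min (optimalCost l E) (c.2 + (1 - c.1) * optimalCost l E) := rfl

theorem exists_sublist_listCost_eq_optimalCost (l : List (ℝ × ℝ)) (E : ℝ) :
    ∃ s : List (ℝ × ℝ), s.Sublist l ∧ listCost s E = optimalCost l E := by
  induction l with
  | nil => exact ⟨[], .slnil, rfl⟩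
  | cons c l ih =>
    obtain ⟨s, hs, hcost⟩ := ih
    rcases le_total (optimalCost l E) (c.2 + (1 - c.1) * optimalCost l E) with hskip | htoss
    · exact ⟨s, hs.cons c, by rw [optimalCost_cons, min_eq_left hskip, hcost]⟩
    · refine ⟨c :: s, hs.cons_cons c, ?_⟩
      rw [optimalCost_cons, min_eq_right htoss, listCost_cons_s7, hcost]

theorem optimalCost_le_listCost {s l : List (ℝ × ℝ)} (hs : s.Sublist l) (E : ℝ)
    (hP : ∀ c ∈ l, c.1 ≤ 1) : optimalCost l E ≤ listCost s E := by
  induction hs with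
  | slnil => rfl
  | cons c _ ih =>
    exact (min_le_left _ _).trans (ih fun d hd => hP d (List.mem_cons_of_mem c hd))
  | cons_cons c _ ih =>
    have hc : 0 ≤ 1 - c.1 := sub_nonneg.2 (hP c List.mem_cons_self)
    calc optimalCost (c :: _) E ≤ c.2 + (1 - c.1) * optimalCost _ E := min_le_right _ _
      _ ≤ c.2 + (1 - c.1) * listCost _ E := by
        gcongr
        exact ih fun d hd => hP d (List.mem_cons_of_mem c hd)

/-- Backwards-induction characterization of the optimal strategy when the coins must
be considered in a given order and each may be tossed or skipped: the minimum of
`COST(s, E)` over all order-preserving sublists `s` of `l` equals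
`foldr (fun c a => min a (μ_c + (1 - P_c) · a)) E l`. -/
theorem backwards_induction_optimal
    (E : ℝ) (l : List (ℝ × ℝ))
    (hcoin : ∀ c ∈ l, 0 ≤ c.1 ∧ c.1 ≤ 1 ∧ 0 ≤ c.2) :
    IsLeast {x : ℝ | ∃ s : List (ℝ × ℝ), s.Sublist l ∧ listCost s E = x}
      (l.foldr (fun c a => min a (c.2 + (1 - c.1) * a)) E) := by
  refine ⟨exists_sublist_listCost_eq_optimalCost l E, ?_⟩
  rintro _ ⟨s, hs, rfl⟩
  exact optimalCost_le_listCost hs E fun c hc => (hcoin c hc).2.1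
end

section
/- Let D ⊆ (0,1] be a finite set with at least two elements and let μ : D → ℝ be a cost function such that every point of D is essential, i.e., for every P ∈ D there exists a penalty E_P > 0 such that μ(P) + (1−P)·E_P < μ(Q) + (1−Q)·E_P for every Q ∈ D with Q ≠ P. Then μ is strictly convex on D: for all P₁ < P₂ < P₃ in D, (μ(P₂) − μ(P₁))/(P₂ − P₁) < (μ(P₃) − μ(P₂))/(P₃ − P₂). -/
/-- Lemma 5(1): if every simple coin of a discrete adjustable coin is essential, then
the cost function `μ` is strictly convex on its domain `D`: slopes of secant lines
are strictly increasing. -/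
theorem essential_implies_strictly_convex
    (D : Finset ℝ) (hD : ∀ P ∈ D, 0 < P ∧ P ≤ 1) (hcard : 2 ≤ D.card)
    (μ : ℝ → ℝ)
    (hess : ∀ P ∈ D, ∃ E : ℝ, 0 < E ∧
      ∀ Q ∈ D, Q ≠ P → μ P + (1 - P) * E < μ Q + (1 - Q) * E) :
    ∀ P₁ ∈ D, ∀ P₂ ∈ D, ∀ P₃ ∈ D, P₁ < P₂ → P₂ < P₃ →
      (μ P₂ - μ P₁) / (P₂ - P₁) < (μ P₃ - μ P₂) / (P₃ - P₂) := by
  intro P₁ h1 P₂ h2 P₃ h3 h12 h23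
  obtain ⟨E, hE, h⟩ := hess P₂ h2
  have hA := h P₁ h1 (by linarith)
  have hB := h P₃ h3 (by linarith)
  have s1 : (μ P₂ - μ P₁) / (P₂ - P₁) < E := by
    rw [div_lt_iff₀ (by linarith)]; nlinarith
  have s2 : E < (μ P₃ - μ P₂) / (P₃ - P₂) := by
    rw [lt_div_iff₀ (by linarith)]; nlinarith
  linarith
end

section
/- Let n ≥ 1 and let m : {1,…,n} → ℕ with m_i ≥ 2 for all i, and let N ≥ 1 be a natural number. Set h_i = 1/m_i, D = (∏_{i=1}^n m_i / N)², and for S ⊆ {1,…,n} define COST(S) = (∏_{i∈S} h_i)·(1 + D·∏_{i∉S} h_i²). Then min over all subsets S of COST(S) equals 2/N if and only if there exists a subset S ⊆ {1,…,n} with ∏_{i∈S} m_i = N; moreover COST(S) ≥ 2/N for every S. (This is the correctness of the reduction from the subset product problem underlying the NP-hardness of the {0,1} adjustable-coins problem.) -/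
open Finset

/-- Correctness of the reduction from the subset product problem: with
`h_i = 1 / m_i` and `D = (∏ i m_i / N)²`, every subset `S` has
`COST(S) = (∏_{i∈S} h_i)·(1 + D·∏_{i∉S} h_i²) ≥ 2/N`, and the minimum over all
subsets equals `2/N` iff some subset `S` satisfies `∏_{i∈S} m_i = N`. -/
theorem subset_product_reduction
    (n : ℕ) (hn : 1 ≤ n) (m : Fin n → ℕ) (hm : ∀ i, 2 ≤ m i)
    (N : ℕ) (hN : 1 ≤ N)
    (h : Fin n → ℝ) (hh : ∀ i, h i = 1 / (m i : ℝ))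
    (D : ℝ) (hD : D = ((∏ i, (m i : ℝ)) / (N : ℝ)) ^ 2) :
    (∀ S : Finset (Fin n),
      2 / (N : ℝ) ≤ (∏ i ∈ S, h i) * (1 + D * ∏ i ∈ Sᶜ, (h i) ^ 2))
    ∧ ((∃ S : Finset (Fin n),
          (∏ i ∈ S, h i) * (1 + D * ∏ i ∈ Sᶜ, (h i) ^ 2) = 2 / (N : ℝ))
        ↔ (∃ S : Finset (Fin n), ∏ i ∈ S, m i = N)) := by
  have hNpos : (0 : ℝ) < N := by exact_mod_cast hN
  have hmpos : ∀ i, (0 : ℝ) < (m i : ℝ) := fun i => by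
    have := hm i; exact_mod_cast Nat.lt_of_lt_of_le (by norm_num) this
  have key : ∀ S : Finset (Fin n),
      (∏ i ∈ S, h i) * (1 + D * ∏ i ∈ Sᶜ, (h i) ^ 2)
        = 1 / (∏ i ∈ S, (m i : ℝ)) + (∏ i ∈ S, (m i : ℝ)) / (N : ℝ) ^ 2 := by
    intro S
    have hA : (0 : ℝ) < ∏ i ∈ S, (m i : ℝ) := prod_pos (fun i _ => hmpos i)
    have hB : (0 : ℝ) < ∏ i ∈ Sᶜ, (m i : ℝ) := prod_pos (fun i _ => hmpos i)
    have h1 : ∏ i ∈ S, h i = (∏ i ∈ S, (m i : ℝ))⁻¹ := by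
      simp [hh, one_div]
    have h2 : ∏ i ∈ Sᶜ, (h i) ^ 2 = ((∏ i ∈ Sᶜ, (m i : ℝ))⁻¹) ^ 2 := by
      rw [prod_pow]
      simp [hh, one_div]
    have hAB : (∏ i ∈ S, (m i : ℝ)) * (∏ i ∈ Sᶜ, (m i : ℝ)) = ∏ i, (m i : ℝ) :=
      prod_mul_prod_compl S _
    rw [h1, h2, hD, ← hAB]
    field_simp
  have ineq : ∀ S : Finset (Fin n), 2 / (N : ℝ) ≤
      (∏ i ∈ S, h i) * (1 + D * ∏ i ∈ Sᶜ, (h i) ^ 2) := by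
    intro S
    rw [key S]
    have hA : (0 : ℝ) < ∏ i ∈ S, (m i : ℝ) := prod_pos (fun i _ => hmpos i)
    set A := ∏ i ∈ S, (m i : ℝ)
    have hd : 1 / A + A / (N : ℝ) ^ 2 - 2 / (N : ℝ) = (A - N) ^ 2 / (A * (N : ℝ) ^ 2) := by
      field_simp
      ring
    nlinarith [sq_nonneg (A - (N : ℝ)), div_nonneg (sq_nonneg (A - (N : ℝ)))
      (le_of_lt (mul_pos hA (pow_pos hNpos 2)))]
  refine ⟨ineq, ?_, ?_⟩
  · rintro ⟨S, hS⟩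
    refine ⟨S, ?_⟩
    rw [key S] at hS
    have hA : (0 : ℝ) < ∏ i ∈ S, (m i : ℝ) := prod_pos (fun i _ => hmpos i)
    set A := ∏ i ∈ S, (m i : ℝ) with hAdef
    have hAN : A = (N : ℝ) := by
      have h2 : (A - N) ^ 2 = 0 := by
        have h3 : (A - N) ^ 2 / (A * (N : ℝ) ^ 2) = 0 := by
          have : 1 / A + A / (N : ℝ) ^ 2 - 2 / (N : ℝ) = (A - N) ^ 2 / (A * (N : ℝ) ^ 2) := by
            field_simp; ring
          linarith [this.symm.trans (by linarith : 1 / A + A / (N : ℝ) ^ 2 - 2 / (N : ℝ) = 0)]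
        have hne : A * (N : ℝ) ^ 2 ≠ 0 := ne_of_gt (mul_pos hA (pow_pos hNpos 2))
        field_simp at h3
        nlinarith [h3]
      have := pow_eq_zero_iff (n := 2) (by norm_num) |>.mp h2
      linarith
    have : ((∏ i ∈ S, m i : ℕ) : ℝ) = (N : ℝ) := by
      push_cast
      exact hAN
    exact_mod_cast this
  · rintro ⟨S, hS⟩
    refine ⟨S, ?_⟩
    rw [key S]
    have hA : (∏ i ∈ S, (m i : ℝ)) = (N : ℝ) := by
      push_cast [← hS]
      rfl
    rw [hA]
    field_simp
    ring
end
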